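/- Let 𝐒 be the block diagonal nonnegative operator S ⊕ I on L ⊕ M, and let K be a closed subspace contained in L. Then the shorted operator satisfies 𝐒_K = S_K P_L, i.e., 𝐒_K acts as S_K on L and as 0 on M. -/

import Mathlib

open ContinuousLinearMap

variable {L M : Type*} [NormedAddCommGroup L] [InnerProductSpace ℂ L] [CompleteSpace L]
  [NormedAddCommGroup M] [InnerProductSpace ℂ M] [CompleteSpace M]

/-- `W` is the Kreĭn shorted operator of `S` with respect to the closed subspace `K`. -/
def IsShortedOp {H : Type*} [NormedAddCommGroup H] [InnerProductSpace ℂ H]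
    [CompleteSpace H] (S W : H →L[ℂ] H) (K : Submodule ℂ H) : Prop :=
  IsSelfAdjoint W ∧
    ∀ f : H, (inner ℂ (W f) f : ℂ).re = ⨅ φ : Kᗮ, (inner ℂ (S (f + φ)) (f + φ) : ℂ).re

/-!
The quadratic form of `S ⊕ T` at `f + φ` splits as `⟪S(f₁ + φ₁), f₁ + φ₁⟫ + ⟪T(f₂ + φ₂), f₂ + φ₂⟫`,
and `(K × {0})ᗮ = Kᗮ × M`. For positive `T` the second summand is nonnegative and vanishes for
`φ₂ = -f₂`, so the infimum defining the shorted form of `S ⊕ T` at `f` is the shorted form of `S`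
at `f₁`. Thus `S_K ⊕ 0` has the quadratic form of the shorted operator of `S ⊕ T`, and on a complex
Hilbert space a self-adjoint operator is determined by its quadratic form.
-/

open WithLp

section Quadratic

variable {𝕜 E : Type*} [RCLike 𝕜] [NormedAddCommGroup E] [InnerProductSpace 𝕜 E] [CompleteSpace E]

theorem IsSelfAdjoint.ext_re_inner_self {A B : E →L[𝕜] E} (hA : IsSelfAdjoint A)
    (hB : IsSelfAdjoint B) (h : ∀ x, RCLike.re (inner 𝕜 (A x) x) = RCLike.re (inner 𝕜 (B x) x)) :
    A = B := by
  have hAB := isSelfAdjoint_iff_isSymmetric.mp (hA.sub hB)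
  rw [← sub_eq_zero, ← coe_inj, toLinearMap_zero, ← hAB.inner_map_self_eq_zero]
  intro x
  rw [← hAB.coe_re_inner_apply_self, coe_coe, sub_apply, inner_sub_left, map_sub, h, sub_self,
    RCLike.ofReal_zero]

end Quadratic

section BlockDiag

variable {𝕜 E F : Type*} [RCLike 𝕜] [NormedAddCommGroup E] [InnerProductSpace 𝕜 E]
  [NormedAddCommGroup F] [InnerProductSpace 𝕜 F]

def blockDiag (A : E →L[𝕜] E) (B : F →L[𝕜] F) : WithLp 2 (E × F) →L[𝕜] WithLp 2 (E × F) :=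
  ((prodContinuousLinearEquiv 2 𝕜 E F).symm : E × F →L[𝕜] WithLp 2 (E × F)) ∘L
    (A.prodMap B) ∘L (prodContinuousLinearEquiv 2 𝕜 E F : WithLp 2 (E × F) →L[𝕜] E × F)

theorem inner_blockDiag_apply (A : E →L[𝕜] E) (B : F →L[𝕜] F) (x y : WithLp 2 (E × F)) :
    inner 𝕜 (blockDiag A B x) y =
      inner 𝕜 (A (ofLp x).1) (ofLp y).1 + inner 𝕜 (B (ofLp x).2) (ofLp y).2 :=
  rfl

theorem IsSelfAdjoint.blockDiag [CompleteSpace E] [CompleteSpace F] {A : E →L[𝕜] E}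
    {B : F →L[𝕜] F} (hA : IsSelfAdjoint A) (hB : IsSelfAdjoint B) :
    IsSelfAdjoint (blockDiag A B) := by
  rw [isSelfAdjoint_iff_isSymmetric] at *
  intro x y
  exact congrArg₂ (· + ·) (hA _ _) (hB _ _)

def Submodule.prodL2 (K : Submodule 𝕜 E) (N : Submodule 𝕜 F) : Submodule 𝕜 (WithLp 2 (E × F)) :=
  Submodule.comap ((prodContinuousLinearEquiv 2 𝕜 E F).toLinearEquiv :
    WithLp 2 (E × F) →ₗ[𝕜] E × F) (K.prod N)

theorem Submodule.mem_prodL2 {K : Submodule 𝕜 E} {N : Submodule 𝕜 F} {x : WithLp 2 (E × F)} :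
    x ∈ K.prodL2 N ↔ (ofLp x).1 ∈ K ∧ (ofLp x).2 ∈ N :=
  Iff.rfl

theorem Submodule.mem_orthogonal_prodL2 {K : Submodule 𝕜 E} {N : Submodule 𝕜 F}
    {x : WithLp 2 (E × F)} : x ∈ (K.prodL2 N)ᗮ ↔ (ofLp x).1 ∈ Kᗮ ∧ (ofLp x).2 ∈ Nᗮ := by
  simp only [mem_orthogonal, mem_prodL2]
  constructor
  · intro hx
    refine ⟨fun k hk => ?_, fun n hn => ?_⟩
    · simpa using hx (toLp 2 (k, 0)) ⟨hk, N.zero_mem⟩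
    · simpa using hx (toLp 2 (0, n)) ⟨K.zero_mem, hn⟩
  · rintro ⟨hx₁, hx₂⟩ u ⟨hu₁, hu₂⟩
    rw [prod_inner_apply, hx₁ _ hu₁, hx₂ _ hu₂, add_zero]

end BlockDiag

section Shorted

variable {E F : Type*} [NormedAddCommGroup E] [InnerProductSpace ℂ E]
  [NormedAddCommGroup F] [InnerProductSpace ℂ F]

theorem IsShortedOp.unique [CompleteSpace E] {S W W' : E →L[ℂ] E} {K : Submodule ℂ E}
    (hW : IsShortedOp S W K) (hW' : IsShortedOp S W' K) : W = W' :=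
  hW.1.ext_re_inner_self hW'.1 fun f => (hW.2 f).trans (hW'.2 f).symm

theorem re_inner_blockDiag_apply_self (A : E →L[ℂ] E) (B : F →L[ℂ] F) (x : WithLp 2 (E × F)) :
    (inner ℂ (blockDiag A B x) x).re =
      (inner ℂ (A (ofLp x).1) (ofLp x).1).re + (inner ℂ (B (ofLp x).2) (ofLp x).2).re := by
  rw [inner_blockDiag_apply, Complex.add_re]

theorem iInf_re_inner_blockDiag {S : E →L[ℂ] E} {T : F →L[ℂ] F} (hS : S.IsPositive)
    (hT : T.IsPositive) (K : Submodule ℂ E) (f : WithLp 2 (E × F)) :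
    ⨅ φ : (K.prodL2 (⊥ : Submodule ℂ F))ᗮ, (inner ℂ (blockDiag S T (f + φ)) (f + φ)).re =
      ⨅ ψ : Kᗮ, (inner ℂ (S ((ofLp f).1 + ψ)) ((ofLp f).1 + ψ)).re := by
  have hbdd_left : BddBelow (Set.range fun φ : (K.prodL2 (⊥ : Submodule ℂ F))ᗮ =>
      (inner ℂ (blockDiag S T (f + φ)) (f + φ)).re) := by
    refine ⟨0, ?_⟩
    rintro _ ⟨φ, rfl⟩
    exact add_nonneg (hS.re_inner_nonneg_left _) (hT.re_inner_nonneg_left _)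
  have hbdd_right : BddBelow (Set.range fun ψ : Kᗮ =>
      (inner ℂ (S ((ofLp f).1 + ψ)) ((ofLp f).1 + ψ)).re) := by
    refine ⟨0, ?_⟩
    rintro _ ⟨ψ, rfl⟩
    exact hS.re_inner_nonneg_left _
  apply le_antisymm
  · refine le_ciInf fun ψ => ?_
    -- cancel the `F`-component of `f` with the orthogonal vector `(ψ, -f₂)`
    have hφ : toLp 2 ((ψ : E), -(ofLp f).2) ∈ (K.prodL2 (⊥ : Submodule ℂ F))ᗮ :=
      Submodule.mem_orthogonal_prodL2.mpr
        ⟨ψ.2, by rw [Submodule.bot_orthogonal_eq_top]; exact Submodule.mem_top⟩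
    refine (ciInf_le hbdd_left ⟨_, hφ⟩).trans_eq ?_
    rw [re_inner_blockDiag_apply_self]
    simp
  · refine le_ciInf fun φ => ?_
    have hψ : (ofLp (φ : WithLp 2 (E × F))).1 ∈ Kᗮ :=
      (Submodule.mem_orthogonal_prodL2.mp φ.2).1
    refine (ciInf_le hbdd_right ⟨_, hψ⟩).trans ?_
    rw [re_inner_blockDiag_apply_self]
    exact le_add_of_nonneg_right (hT.re_inner_nonneg_left _)

theorem IsShortedOp.blockDiag [CompleteSpace E] [CompleteSpace F] {S W : E →L[ℂ] E}
    {T : F →L[ℂ] F} {K : Submodule ℂ E}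
    (hW : IsShortedOp S W K) (hS : S.IsPositive) (hT : T.IsPositive) :
    IsShortedOp (blockDiag S T) (blockDiag W 0) (K.prodL2 ⊥) := by
  refine ⟨hW.1.blockDiag (IsSelfAdjoint.zero _), fun f => ?_⟩
  rw [re_inner_blockDiag_apply_self, iInf_re_inner_blockDiag hS hT, ← hW.2]
  simp

end Shorted

theorem shorted_blockDiag_general (S : L →L[ℂ] L) (hS : S.IsPositive)
    (K : Submodule ℂ L)
    (e : WithLp 2 (L × M) ≃L[ℂ] L × M)
    (he : ∀ x : WithLp 2 (L × M), e x = (WithLp.equiv 2 (L × M)) x)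
    (bigS : WithLp 2 (L × M) →L[ℂ] WithLp 2 (L × M))
    (hbigS : bigS = (e.symm : L × M →L[ℂ] WithLp 2 (L × M)) ∘L
      (S.prodMap (1 : M →L[ℂ] M)) ∘L (e : WithLp 2 (L × M) →L[ℂ] L × M))
    (K' : Submodule ℂ (WithLp 2 (L × M)))
    (hK' : K' = Submodule.comap (e.toLinearEquiv : WithLp 2 (L × M) →ₗ[ℂ] L × M)
      (K.prod ⊥))
    (W₀ : L →L[ℂ] L) (hW₀ : IsShortedOp S W₀ K)
    (W : WithLp 2 (L × M) →L[ℂ] WithLp 2 (L × M)) (hW : IsShortedOp bigS W K') :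
    ∀ x : WithLp 2 (L × M), e (W x) = (W₀ (e x).1, 0) := by
  obtain rfl : e = prodContinuousLinearEquiv 2 ℂ L M := ContinuousLinearEquiv.ext (funext he)
  subst hbigS hK'
  have hW_eq : W = blockDiag W₀ 0 := hW.unique (hW₀.blockDiag hS isPositive_one)
  intro x
  rw [hW_eq]
  rfl

/-- Let `𝐒 = S ⊕ I` be block diagonal on the Hilbert space
`H = L ⊕₂ M` and let `K ⊆ L` be a closed subspace.  Then `𝐒_K = S_K P_L`, i.e. the
shorted operator of `𝐒` acts as `S_K` on `L` and as `0` on `M`. -/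
theorem shorted_blockDiag (S : L →L[ℂ] L) (hS : S.IsPositive)
    (K : Submodule ℂ L) (hK : IsClosed (K : Set L))
    (e : WithLp 2 (L × M) ≃L[ℂ] L × M)
    (he : ∀ x : WithLp 2 (L × M), e x = (WithLp.equiv 2 (L × M)) x)
    (bigS : WithLp 2 (L × M) →L[ℂ] WithLp 2 (L × M))
    (hbigS : bigS = (e.symm : L × M →L[ℂ] WithLp 2 (L × M)) ∘L
      (S.prodMap (1 : M →L[ℂ] M)) ∘L (e : WithLp 2 (L × M) →L[ℂ] L × M))
    (K' : Submodule ℂ (WithLp 2 (L × M)))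
    (hK' : K' = Submodule.comap (e.toLinearEquiv : WithLp 2 (L × M) →ₗ[ℂ] L × M)
      (K.prod ⊥))
    (W₀ : L →L[ℂ] L) (hW₀ : IsShortedOp S W₀ K)
    (W : WithLp 2 (L × M) →L[ℂ] WithLp 2 (L × M)) (hW : IsShortedOp bigS W K') :
    ∀ x : WithLp 2 (L × M), e (W x) = (W₀ (e x).1, 0) :=
  shorted_blockDiag_general S hS K e he bigS hbigS K' hK' W₀ hW₀ W hW
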